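/- (Exactness of the full-order cyclic approximation.) For every n ≥ 0, the n-th order cyclic approximation is exact: R_n^{(n)}(t;x) = R_n(t;x), where R_n(t;x) = per_α(K(x∪t))/per_α(K(x)) for any matrix K with per_α(K(x')) ≠ 0 for all subsets x' ⊆ x. -/

import Mathlib

open Finset

/-- Number of cycles of a permutation, counting fixed points as 1-cycles. -/
noncomputable def numCycles {ι : Type*} [Fintype ι] [DecidableEq ι] (σ : Equiv.Perm ι) : ℕ :=
  σ.cycleType.card + (Finset.univ.filter fun i => σ i = i).card

/-- The α-permanent of a matrix. -/
noncomputable def perA {ι : Type*} [Fintype ι] [DecidableEq ι] (α : ℝ) (A : Matrix ι ι ℝ) : ℝ :=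
  ∑ σ : Equiv.Perm ι, α ^ numCycles σ * ∏ i, A i (σ i)

/-- The sum of cyclic products: sum over single-cycle permutations. -/
noncomputable def cyp {ι : Type*} [Fintype ι] [DecidableEq ι] (A : Matrix ι ι ℝ) : ℝ :=
  ∑ σ ∈ Finset.univ.filter (fun σ : Equiv.Perm ι => numCycles σ = 1), ∏ i, A i (σ i)
mutual
/-- `Rap α K x k t s` is the (k+1)-cycle approximation `R^{(k)}(t; x(s))` to the permanental
ratio, for points indexed by the finite set `s`. -/
noncomputable def Rap {𝒳 ι : Type*} [DecidableEq ι] (α : ℝ) (K : 𝒳 → 𝒳 → ℝ) (x : ι → 𝒳) :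
    ℕ → 𝒳 → Finset ι → ℝ
  | 0, t, _ => α * K t t
  | (k + 1), t, s => α * K t t +
      α * ∑ i ∈ s.attach, K t (x i.1) * Gap α K x k t (x i.1) (s.erase i.1)
termination_by k t s => (s.card, 0)
decreasing_by
  all_goals first
    | exact Prod.Lex.left _ _ (Finset.card_erase_lt_of_mem (Finset.coe_mem _))
    | exact Prod.Lex.right _ Nat.zero_lt_one

/-- Auxiliary cycle-completion sums: `Gap α K x l t u s` continues a cycle that started at `t`
and currently sits at `u`, using remaining points `x(s)`, dividing by lower-order
approximations as in the paper's recursive cyclic expansion. -/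
noncomputable def Gap {𝒳 ι : Type*} [DecidableEq ι] (α : ℝ) (K : 𝒳 → 𝒳 → ℝ) (x : ι → 𝒳) :
    ℕ → 𝒳 → 𝒳 → Finset ι → ℝ
  | 0, t, u, s => K u t / Rap α K x 0 u s
  | (l + 1), t, u, s =>
      (K u t + ∑ j ∈ s.attach, K u (x j.1) * Gap α K x l t (x j.1) (s.erase j.1)) /
        Rap α K x (l + 1) u s
termination_by l t u s => (s.card, 1)
decreasing_by
  all_goals first
    | exact Prod.Lex.left _ _ (Finset.card_erase_lt_of_mem (Finset.coe_mem _))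
    | exact Prod.Lex.right _ Nat.zero_lt_one
end

section NumCyclesLemmas

open Equiv Equiv.Perm

variable {β γ : Type*} [Fintype β] [DecidableEq β] [Fintype γ] [DecidableEq γ]

/-- The same-cycle setoid of a permutation. -/
def scSetoid (σ : Equiv.Perm β) : Setoid β :=
  ⟨σ.SameCycle, ⟨fun _ => Equiv.Perm.SameCycle.refl _ _, fun h => h.symm, fun h h' => h.trans h'⟩⟩

lemma sameCycle_iff_pow {σ : Equiv.Perm β} {a b : β} :
    σ.SameCycle a b ↔ ∃ n : ℕ, (σ ^ n) a = b := by
  constructor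
  · intro h
    obtain ⟨i, _, _, h⟩ := h.exists_pow_eq σ
    exact ⟨i, h⟩
  · rintro ⟨n, rfl⟩
    exact ⟨n, by simp [zpow_natCast]⟩

lemma sameCycle_fixed {σ : Equiv.Perm β} {a b : β} (ha : σ a = a) (h : σ.SameCycle a b) :
    a = b := by
  obtain ⟨n, rfl⟩ := h
  simp [Equiv.Perm.zpow_apply_eq_self_of_apply_eq_self ha]

lemma numCycles_eq_card_quot (σ : Equiv.Perm β) :
    numCycles σ = Nat.card (Quotient (scSetoid σ)) := by
  classical
  have hwd : ∀ a b : β, (scSetoid σ) a b → σ.cycleOf a = σ.cycleOf b := fun a b h =>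
    Equiv.Perm.SameCycle.cycleOf_eq h
  -- the bijection
  set g : β → ({c // c ∈ σ.cycleFactorsFinset} ⊕ {i : β // σ i = i}) := fun i =>
    if h : σ i = i then Sum.inr ⟨i, h⟩ else
      Sum.inl ⟨σ.cycleOf i, Equiv.Perm.cycleOf_mem_cycleFactorsFinset_iff.mpr (Equiv.Perm.mem_support.2 h)⟩
    with hg
  have hgwd : ∀ a b : β, (scSetoid σ) a b → g a = g b := by
    intro a b hab
    by_cases ha : σ a = a
    · obtain rfl := sameCycle_fixed ha hab
      rfl
    · have hb : ¬ σ b = b := by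
        intro hb
        have hba : b = a := sameCycle_fixed hb ((scSetoid σ).iseqv.symm hab)
        subst hba
        exact ha hb
      simp only [hg, dif_neg ha, dif_neg hb, Sum.inl.injEq, Subtype.mk.injEq]
      exact hwd a b hab
  set G : Quotient (scSetoid σ) → ({c // c ∈ σ.cycleFactorsFinset} ⊕ {i : β // σ i = i}) :=
    Quotient.lift g hgwd with hG
  have hbij : Function.Bijective G := by
    constructor
    · rintro ⟨a⟩ ⟨b⟩ hab
      change g a = g b at hab
      apply Quotient.sound
      by_cases ha : σ a = a <;> by_cases hb : σ b = b <;>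
        simp only [hg, dif_pos, dif_neg, ha, hb] at hab
      · obtain rfl : a = b := by simpa using hab
        exact Equiv.Perm.SameCycle.refl _ _
      · exact absurd hab (by simp)
      · exact absurd hab (by simp)
      · have hco : σ.cycleOf a = σ.cycleOf b := by simpa using hab
        have hb' : b ∈ (σ.cycleOf b).support :=
          Equiv.Perm.mem_support_cycleOf_iff.mpr ⟨Equiv.Perm.SameCycle.refl _ _,
            Equiv.Perm.mem_support.2 hb⟩
        rw [← hco] at hb'
        exact (Equiv.Perm.mem_support_cycleOf_iff.mp hb').1
    · rintro (⟨c, hc⟩ | ⟨i, hi⟩)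
      · obtain ⟨a, ha⟩ := (Equiv.Perm.mem_cycleFactorsFinset_iff.mp hc).1
        have ha' : a ∈ c.support := Equiv.Perm.mem_support.2 ha.1
        have haσ : σ a = c a := ((Equiv.Perm.mem_cycleFactorsFinset_iff.mp hc).2 a ha').symm
        have haσ' : ¬ σ a = a := by rw [haσ]; exact ha.1
        refine ⟨Quotient.mk _ a, ?_⟩
        simp only [hG, Quotient.lift_mk, hg, dif_neg haσ']
        congr 1
        exact Subtype.ext (Equiv.Perm.cycle_is_cycleOf ha' hc).symm
      · exact ⟨Quotient.mk _ i, by simp [hG, hg, dif_pos hi]⟩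
  have := Nat.card_congr (Equiv.ofBijective G hbij)
  rw [this]
  rw [Nat.card_sum]
  simp only [Nat.card_eq_fintype_card, Fintype.card_coe, Fintype.card_subtype]
  rw [numCycles, Equiv.Perm.cycleType_def, Multiset.card_map]
  congr 1
  rw [Finset.filter_mem_eq_inter, Finset.univ_inter]
  rfl

end NumCyclesLemmas
section NumCyclesLemmas2

open Equiv Equiv.Perm

variable {β γ : Type*} [Fintype β] [DecidableEq β] [Fintype γ] [DecidableEq γ]

lemma permCongr_pow_apply (e : β ≃ γ) (σ : Equiv.Perm β) (n : ℕ) (b : β) :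
    ((e.permCongr σ) ^ n) (e b) = e ((σ ^ n) b) := by
  induction n generalizing b with
  | zero => simp
  | succ n ih =>
      rw [pow_succ, pow_succ, Equiv.Perm.mul_apply, Equiv.Perm.mul_apply,
        Equiv.permCongr_apply, Equiv.symm_apply_apply, ih]

lemma sameCycle_permCongr_iff (e : β ≃ γ) (σ : Equiv.Perm β) (a b : β) :
    σ.SameCycle a b ↔ (e.permCongr σ).SameCycle (e a) (e b) := by
  rw [sameCycle_iff_pow, sameCycle_iff_pow]
  constructor
  · rintro ⟨n, rfl⟩
    exact ⟨n, permCongr_pow_apply e σ n a⟩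
  · rintro ⟨n, hn⟩
    refine ⟨n, e.injective ?_⟩
    rw [← permCongr_pow_apply e σ n a, hn]

lemma numCycles_permCongr (e : β ≃ γ) (σ : Equiv.Perm β) :
    numCycles (e.permCongr σ) = numCycles σ := by
  rw [numCycles_eq_card_quot, numCycles_eq_card_quot]
  exact (Nat.card_congr (Quotient.congr e (sameCycle_permCongr_iff e σ))).symm

-- splice lemmas
variable (σ : Equiv.Perm (Option β))

lemma numCycles_option_fix (h : σ none = none) :
    numCycles σ = numCycles (Equiv.removeNone σ) + 1 := by
  set σ' := Equiv.removeNone σ with hσ'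
  have h1 : ∀ a : β, σ (some a) = some (σ' a) := by
    intro a
    rcases hsa : σ (some a) with _ | y
    · exact absurd (σ.injective (h.trans hsa.symm)) (by simp)
    · rw [← hsa]
      exact (Equiv.removeNone_some σ ⟨y, hsa⟩).symm
  have hpow : ∀ (n : ℕ) (a : β), (σ ^ n) (some a) = some ((σ' ^ n) a) := by
    intro n
    induction n with
    | zero => simp
    | succ n ih =>
        intro a
        rw [pow_succ, pow_succ, Equiv.Perm.mul_apply, Equiv.Perm.mul_apply, h1, ih]
  have hwd : ∀ a b : β, (scSetoid σ') a b →
      Quotient.mk (scSetoid σ) (some a) = Quotient.mk (scSetoid σ) (some b) := by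
    intro a b hab
    obtain ⟨n, rfl⟩ := sameCycle_iff_pow.mp hab
    exact Quotient.sound (sameCycle_iff_pow.mpr ⟨n, hpow n a⟩)
  set G : Option (Quotient (scSetoid σ')) → Quotient (scSetoid σ) := fun o =>
    o.elim (Quotient.mk _ none) (Quotient.lift (fun a => Quotient.mk _ (some a)) hwd) with hG
  have hbij : Function.Bijective G := by
    constructor
    · rintro (_ | ⟨q1⟩) (_ | ⟨q2⟩) hq
      · rfl
      · induction q2 using Quotient.ind with
        | _ a =>
          exact absurd (sameCycle_fixed h (Quotient.exact hq)) (by simp)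
      · induction q1 using Quotient.ind with
        | _ a =>
          exact absurd (sameCycle_fixed h (Quotient.exact hq.symm)) (by simp)
      · induction q1 using Quotient.ind with
        | _ a =>
          induction q2 using Quotient.ind with
          | _ b =>
            have hab : σ.SameCycle (some a) (some b) := Quotient.exact hq
            obtain ⟨n, hn⟩ := sameCycle_iff_pow.mp hab
            rw [hpow n a] at hn
            exact congrArg _ (Quotient.sound (sameCycle_iff_pow.mpr ⟨n, Option.some_injective _ hn⟩))
    · intro q
      induction q using Quotient.ind with
      | _ o =>
        rcases o with _ | a
        · exact ⟨none, rfl⟩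
        · exact ⟨some (Quotient.mk _ a), rfl⟩
  have := Nat.card_congr (Equiv.ofBijective G hbij)
  rw [numCycles_eq_card_quot, numCycles_eq_card_quot, ← this, Finite.card_option]

lemma numCycles_option_splice (j : β) (h : σ none = some j) :
    numCycles (Equiv.removeNone σ) = numCycles σ := by
  set σ' := Equiv.removeNone σ with hσ'
  have hstep : ∀ a : β, σ.SameCycle (some a) (some (σ' a)) := by
    intro a
    rcases hsa : σ (some a) with _ | y
    · refine sameCycle_iff_pow.mpr ⟨2, ?_⟩
      have h2 : (σ ^ 2) (some a) = σ none := by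
        rw [pow_two, Equiv.Perm.mul_apply, hsa]
      rw [h2, ← Equiv.removeNone_none σ hsa]
    · refine sameCycle_iff_pow.mpr ⟨1, ?_⟩
      rw [pow_one, hsa]
      exact ((Equiv.removeNone_some σ ⟨y, hsa⟩).trans hsa).symm
  have hfwd : ∀ (n : ℕ) (a : β), σ.SameCycle (some a) (some ((σ' ^ n) a)) := by
    intro n
    induction n with
    | zero => intro a; simpa using Equiv.Perm.SameCycle.refl σ (some a)
    | succ n ih =>
        intro a
        have : (σ' ^ (n+1)) a = (σ' ^ n) (σ' a) := by
          rw [pow_succ, Equiv.Perm.mul_apply]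
        rw [this]
        exact (hstep a).trans (ih (σ' a))
  have hbwd : ∀ (n : ℕ) (a b : β), (σ ^ n) (some a) = some b → Equiv.Perm.SameCycle σ' a b := by
    intro n
    induction n using Nat.strong_induction_on with
    | _ n ih =>
      intro a b hn
      match n, hn with
      | 0, hn => exact Option.some_injective _ hn ▸ Equiv.Perm.SameCycle.refl _ _
      | (m+1), hn =>
        rcases hsa : σ (some a) with _ | z
        · have hσ'a : σ' a = j := by
            have := Equiv.removeNone_none σ hsa
            rw [h] at this
            exact Option.some_injective _ this
          match m, hn with
          | 0, hn => rw [pow_one, hsa] at hn; exact absurd hn (by simp)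
          | (m'+1), hn =>
            have : (σ ^ (m'+2)) (some a) = (σ ^ m') (σ none) := by
              rw [show (σ:Equiv.Perm (Option β))^(m'+2) = σ ^ m' * σ * σ from by group,
                Equiv.Perm.mul_apply, Equiv.Perm.mul_apply, hsa]
            rw [this, h] at hn
            have hjb := ih m' (by omega) j b hn
            exact (sameCycle_iff_pow.mpr ⟨1, by rw [pow_one, hσ'a]⟩).trans hjb
        · have hσ'a : σ' a = z := Option.some_injective _ ((Equiv.removeNone_some σ ⟨z, hsa⟩).trans hsa)
          have : (σ ^ (m+1)) (some a) = (σ ^ m) (some z) := by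
            rw [pow_succ, Equiv.Perm.mul_apply, hsa]
          rw [this] at hn
          exact (sameCycle_iff_pow.mpr ⟨1, by rw [pow_one, hσ'a]⟩).trans (ih m (by omega) z b hn)
  have hwd : ∀ a b : β, (scSetoid σ') a b →
      Quotient.mk (scSetoid σ) (some a) = Quotient.mk (scSetoid σ) (some b) := by
    intro a b hab
    obtain ⟨n, rfl⟩ := sameCycle_iff_pow.mp hab
    exact Quotient.sound (hfwd n a)
  set G : Quotient (scSetoid σ') → Quotient (scSetoid σ) :=
    Quotient.lift (fun a => Quotient.mk _ (some a)) hwd with hG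
  have hbij : Function.Bijective G := by
    constructor
    · rintro ⟨a⟩ ⟨b⟩ hq
      have hab : σ.SameCycle (some a) (some b) := Quotient.exact hq
      obtain ⟨n, hn⟩ := sameCycle_iff_pow.mp hab
      exact Quotient.sound (hbwd n a b hn)
    · intro q
      induction q using Quotient.ind with
      | _ o =>
        rcases o with _ | a
        · refine ⟨Quotient.mk _ j, Quotient.sound ?_⟩
          exact (sameCycle_iff_pow.mpr ⟨1, by rw [pow_one, h]⟩).symm
        · exact ⟨Quotient.mk _ a, rfl⟩
  rw [numCycles_eq_card_quot, numCycles_eq_card_quot]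
  exact Nat.card_congr (Equiv.ofBijective G hbij)

end NumCyclesLemmas2
section PerALemmas

open Equiv Equiv.Perm Finset

variable {β γ : Type*} [Fintype β] [DecidableEq β] [Fintype γ] [DecidableEq γ]

lemma perA_isEmpty [IsEmpty β] (α : ℝ) (B : Matrix β β ℝ) : perA α B = 1 := by
  rw [perA, Fintype.sum_subsingleton _ (1 : Equiv.Perm β)]
  simp [numCycles, Equiv.Perm.cycleType_one]

lemma perA_subsingleton [Subsingleton β] (α : ℝ) (b : β) (B : Matrix β β ℝ) :
    perA α B = α * B b b := by
  have hcard : Fintype.card β = 1 := Fintype.card_eq_one_iff.mpr ⟨b, fun y => Subsingleton.elim y b⟩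
  rw [perA, Fintype.sum_subsingleton _ (1 : Equiv.Perm β)]
  have h1 : numCycles (1 : Equiv.Perm β) = 1 := by
    simp [numCycles, Equiv.Perm.cycleType_one, Finset.filter_true_of_mem, hcard]
  rw [h1, pow_one, Fintype.prod_subsingleton _ b]
  simp

lemma perA_reindex (α : ℝ) (e : β ≃ γ) (B : Matrix γ γ ℝ) :
    perA α (B.submatrix e e) = perA α B := by
  rw [perA, perA]
  refine Fintype.sum_equiv e.permCongr _ _ ?_
  intro σ
  rw [numCycles_permCongr]
  congr 1
  rw [← Equiv.prod_comp e (fun c => B c ((e.permCongr σ) c))]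
  refine Finset.prod_congr rfl fun b _ => ?_
  simp [Matrix.submatrix_apply, Equiv.permCongr_apply]

lemma perA_option (α : ℝ) (B : Matrix (Option β) (Option β) ℝ) :
    perA α B = α * (B none none * perA α (B.submatrix some some)) +
      ∑ j : β, B none (some j) *
        perA α (Matrix.of fun a b => if b = j then B (some a) none else B (some a) (some b)) := by
  rw [perA, ← Equiv.sum_comp (Equiv.Perm.decomposeOption (α := β)).symm
      (fun σ => α ^ numCycles σ * ∏ i, B i (σ i)), Fintype.sum_prod_type, Fintype.sum_option]
  congr 1
  · have key : ∀ τ : Equiv.Perm β,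
        (fun σ : Equiv.Perm (Option β) => α ^ numCycles σ * ∏ i, B i (σ i))
            (Equiv.Perm.decomposeOption.symm (none, τ))
          = (α * B none none) *
            (α ^ numCycles τ * ∏ a, (B.submatrix some some) a (τ a)) := by
      intro τ
      have hσ : (Equiv.Perm.decomposeOption.symm ((none : Option β), τ)) = τ.optionCongr := by
        simp [Equiv.Perm.decomposeOption]
        rfl
      rw [hσ]
      have h0 : (τ.optionCongr : Equiv.Perm (Option β)) none = none := by simp
      have hnc : numCycles τ.optionCongr = numCycles τ + 1 := by
        rw [numCycles_option_fix _ h0, Equiv.removeNone_optionCongr]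
      simp only [hnc, Fintype.prod_option, Matrix.submatrix_apply, Equiv.optionCongr_apply,
        Option.map_some, Option.map_none, h0]
      ring
    rw [Finset.sum_congr rfl (fun τ _ => key τ), ← Finset.mul_sum, perA]
    ring
  · refine Finset.sum_congr rfl fun j _ => ?_
    have key : ∀ τ : Equiv.Perm β,
        (fun σ : Equiv.Perm (Option β) => α ^ numCycles σ * ∏ i, B i (σ i))
            (Equiv.Perm.decomposeOption.symm (some j, τ))
          = B none (some j) * (α ^ numCycles τ *
              ∏ a, (Matrix.of fun a b => if b = j then B (some a) none else B (some a) (some b))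
                a (τ a)) := by
      intro τ
      set σ : Equiv.Perm (Option β) := Equiv.Perm.decomposeOption.symm (some j, τ) with hσdefn
      have hσdef : σ = Equiv.swap none (some j) * τ.optionCongr := by
        simp [hσdefn, Equiv.Perm.decomposeOption]
      have hnone : σ none = some j := by
        rw [hσdef, Equiv.Perm.mul_apply]
        simp
      have hrm : Equiv.removeNone σ = τ := by
        have h2 := Equiv.Perm.decomposeOption.apply_symm_apply ((some j : Option β), τ)
        rw [← hσdefn] at h2
        exact congrArg Prod.snd h2
      have hnc : numCycles σ = numCycles τ := by
        rw [← numCycles_option_splice σ j hnone, hrm]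
      have happ : ∀ a : β, σ (some a) = if τ a = j then none else some (τ a) := by
        intro a
        rw [hσdef, Equiv.Perm.mul_apply]
        simp only [Equiv.optionCongr_apply, Option.map_some]
        by_cases hja : τ a = j
        · rw [hja, if_pos rfl]
          exact Equiv.swap_apply_right _ _
        · rw [if_neg hja]
          exact Equiv.swap_apply_of_ne_of_ne (by simp) (by simpa using hja)
      show α ^ numCycles σ * ∏ i, B i (σ i) = _
      rw [hnc, Fintype.prod_option, hnone]
      have hparts : ∀ a : β, B (some a) (σ (some a)) =
          (Matrix.of fun a b => if b = j then B (some a) none else B (some a) (some b)) a (τ a) := by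
        intro a
        rw [happ a, Matrix.of_apply]
        split_ifs <;> rfl
      rw [Finset.prod_congr rfl (fun a _ => hparts a)]
      ring
    rw [Finset.sum_congr rfl (fun τ _ => key τ), ← Finset.mul_sum, perA]

end PerALemmas
section Abstract

open Finset

variable {𝒳 ι : Type*} [DecidableEq ι]

/-- Permanent of the kernel matrix on points indexed by `s`. -/
noncomputable def PeF (α : ℝ) (K : 𝒳 → 𝒳 → ℝ) (x : ι → 𝒳) (s : Finset ι) : ℝ :=
  perA α (Matrix.of fun a b : {i // i ∈ s} => K (x a.1) (x b.1))

/-- Permanent of the kernel matrix on `s` augmented by an extra point whose row is `u`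
and whose column is `t`. -/
noncomputable def PBF (α : ℝ) (K : 𝒳 → 𝒳 → ℝ) (x : ι → 𝒳) (s : Finset ι) (t u : 𝒳) : ℝ :=
  perA α (Matrix.of fun a b : Option {i // i ∈ s} =>
    K (a.elim u (fun i => x i.1)) (b.elim t (fun i => x i.1)))

variable (α : ℝ) (K : 𝒳 → 𝒳 → ℝ) (x : ι → 𝒳)

lemma PeF_empty : PeF α K x (∅ : Finset ι) = 1 := by
  haveI : IsEmpty {i // i ∈ (∅ : Finset ι)} :=
    ⟨fun a => absurd a.2 (Finset.notMem_empty a.1)⟩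
  exact perA_isEmpty α _

/-- The erase-equivalence. -/
noncomputable def eraseEquiv (s : Finset ι) (j : {i // i ∈ s}) :
    Option {i // i ∈ s.erase j.1} ≃ {i // i ∈ s} :=
  (Finset.subtypeInsertEquivOption (Finset.notMem_erase j.1 s)).symm.trans
    (Equiv.subtypeEquivRight (fun i => by rw [Finset.insert_erase j.2]))

lemma eraseEquiv_val (s : Finset ι) (j : {i // i ∈ s}) (o : Option {i // i ∈ s.erase j.1}) :
    ((eraseEquiv s j) o).1 = o.elim j.1 (fun z => z.1) := by
  rcases o with _ | z <;> rfl

/-- The key cyclic expansion of the augmented permanent. -/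
lemma PBF_expand (s : Finset ι) (t u : 𝒳) :
    PBF α K x s t u = α * (K u t * PeF α K x s) +
      ∑ j ∈ s.attach, K u (x j.1) * PBF α K x (s.erase j.1) t (x j.1) := by
  rw [PBF, perA_option, ← Finset.univ_eq_attach]
  congr 1
  refine Finset.sum_congr rfl fun j _ => ?_
  congr 1
  rw [PBF, ← perA_reindex α (eraseEquiv s j)]
  congr 1
  ext a b
  rcases a with _ | z <;> rcases b with _ | w
  · rw [Matrix.submatrix_apply, Matrix.of_apply, if_pos (Subtype.ext (eraseEquiv_val s j none))]
    rfl
  · have : eraseEquiv s j (some w) ≠ j := by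
      intro hw
      have := (Finset.mem_erase.mp w.2).1
      exact this (by simpa [eraseEquiv_val] using congrArg Subtype.val hw)
    rw [Matrix.submatrix_apply, Matrix.of_apply, if_neg this]
    rfl
  · rw [Matrix.submatrix_apply, Matrix.of_apply, if_pos (Subtype.ext (eraseEquiv_val s j none))]
    rfl
  · have : eraseEquiv s j (some w) ≠ j := by
      intro hw
      have := (Finset.mem_erase.mp w.2).1
      exact this (by simpa [eraseEquiv_val] using congrArg Subtype.val hw)
    rw [Matrix.submatrix_apply, Matrix.of_apply, if_neg this]
    rfl

lemma PBF_insert (s : Finset ι) (i : ι) (hi : i ∉ s) :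
    PBF α K x s (x i) (x i) = PeF α K x (insert i s) := by
  rw [PBF, PeF, ← perA_reindex α (Finset.subtypeInsertEquivOption hi).symm]
  congr 1
  ext a b
  rcases a with _ | z <;> rcases b with _ | w <;> rfl


lemma PeF_def (α : ℝ) (K : 𝒳 → 𝒳 → ℝ) (x : ι → 𝒳) (s : Finset ι) :
    PeF α K x s = perA α (Matrix.of fun a b : {i // i ∈ s} => K (x a.1) (x b.1)) := rfl

lemma PBF_def (α : ℝ) (K : 𝒳 → 𝒳 → ℝ) (x : ι → 𝒳) (s : Finset ι) (t u : 𝒳) :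
    PBF α K x s t u = perA α (Matrix.of fun a b : Option {i // i ∈ s} =>
      K (a.elim u (fun i => x i.1)) (b.elim t (fun i => x i.1))) := rfl

end Abstract
section MainInduction

open Finset

variable {𝒳 ι : Type*} [DecidableEq ι]
variable (α : ℝ) (K : 𝒳 → 𝒳 → ℝ) (x : ι → 𝒳)

lemma main_ind (hα : α ≠ 0) (hne : ∀ s : Finset ι, PeF α K x s ≠ 0) :
    ∀ (N : ℕ) (s : Finset ι), s.card = N → ∀ k, N ≤ k →
      (∀ t, Rap α K x k t s = PBF α K x s t t / PeF α K x s) ∧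
      (∀ t i, i ∉ s → α * Gap α K x k t (x i) s =
        PBF α K x s t (x i) / PeF α K x (insert i s)) := by
  intro N
  induction N with
  | zero =>
      intro s hs k hk
      obtain rfl : s = ∅ := Finset.card_eq_zero.mp hs
      constructor
      · intro t
        have hPB : PBF α K x ∅ t t = α * K t t := by
          rw [PBF_expand]; simp [PeF_empty]
        rcases k with _ | k
        · rw [Rap, hPB, PeF_empty, div_one]
        · rw [Rap, hPB, PeF_empty, div_one]
          simp
      · intro t i hi
        have hPB : PBF α K x ∅ t (x i) = α * K (x i) t := by
          rw [PBF_expand]; simp [PeF_empty]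
        have hIns : PeF α K x (insert i ∅) = α * K (x i) (x i) := by
          rw [← PBF_insert α K x ∅ i hi, PBF_expand]; simp [PeF_empty]
        rcases k with _ | k
        · rw [Gap, Rap, hPB, hIns, mul_div_assoc']
        · rw [Gap, Rap, hPB, hIns]
          simp only [Finset.attach_empty, Finset.sum_empty, add_zero, mul_zero]
          rw [mul_div_assoc']
  | succ N ih =>
      intro s hs k hk
      obtain ⟨k', rfl⟩ : ∃ k', k = k' + 1 := ⟨k - 1, by omega⟩
      have hk' : N ≤ k' := by omega
      have hRap : ∀ t, Rap α K x (k' + 1) t s = PBF α K x s t t / PeF α K x s := by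
        intro t
        rw [Rap]
        have hGj : ∀ j ∈ s.attach, K t (x j.1) * Gap α K x k' t (x j.1) (s.erase j.1) =
            K t (x j.1) * (PBF α K x (s.erase j.1) t (x j.1) / PeF α K x s) / α := by
          intro j _
          have hcard : (s.erase j.1).card = N := by
            rw [Finset.card_erase_of_mem j.2, hs]; omega
          have hG := ((ih (s.erase j.1) hcard k' hk').2 t j.1 (Finset.notMem_erase j.1 s))
          rw [Finset.insert_erase j.2] at hG
          rw [← hG, mul_comm α (Gap α K x k' t (x j.1) (s.erase j.1)), ← mul_assoc,
            mul_div_cancel_right₀ _ hα]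
        rw [Finset.sum_congr rfl hGj, PBF_expand]
        have hS : α * ∑ j ∈ s.attach,
            K t (x j.1) * (PBF α K x (s.erase j.1) t (x j.1) / PeF α K x s) / α =
            (∑ j ∈ s.attach, K t (x j.1) * PBF α K x (s.erase j.1) t (x j.1)) / PeF α K x s := by
          rw [Finset.mul_sum, Finset.sum_div]
          refine Finset.sum_congr rfl fun j _ => ?_
          rw [mul_comm α (K t (x j.1) * (PBF α K x (s.erase j.1) t (x j.1) / PeF α K x s) / α),
            div_mul_cancel₀ _ hα, mul_div_assoc]
        rw [hS, add_div]
        congr 1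
        rw [mul_div_assoc, mul_div_cancel_right₀ _ (hne s)]
      refine ⟨hRap, ?_⟩
      intro t i hi
      rw [Gap]
      have hRapv := hRap (x i)
      rw [PBF_insert α K x s i hi] at hRapv
      rw [hRapv]
      have hGj : ∀ j ∈ s.attach, K (x i) (x j.1) * Gap α K x k' t (x j.1) (s.erase j.1) =
          K (x i) (x j.1) * PBF α K x (s.erase j.1) t (x j.1) / (PeF α K x s * α) := by
        intro j _
        have hcard : (s.erase j.1).card = N := by
          rw [Finset.card_erase_of_mem j.2, hs]; omega
        have hG := ((ih (s.erase j.1) hcard k' hk').2 t j.1 (Finset.notMem_erase j.1 s))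
        rw [Finset.insert_erase j.2] at hG
        have hGap : Gap α K x k' t (x j.1) (s.erase j.1) =
            PBF α K x (s.erase j.1) t (x j.1) / (PeF α K x s * α) := by
          rw [eq_div_iff (mul_ne_zero (hne s) hα),
            show Gap α K x k' t (x j.1) (s.erase j.1) * (PeF α K x s * α) =
              (α * Gap α K x k' t (x j.1) (s.erase j.1)) * PeF α K x s from by ring,
            hG, div_mul_cancel₀ _ (hne s)]
        rw [hGap, mul_div_assoc]
      rw [Finset.sum_congr rfl hGj, ← Finset.sum_div, PBF_expand]
      have hPins := hne (insert i s)
      have hPs := hne s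
      field_simp
  
end MainInduction
theorem cyclic_approx_full_order_exact {n : ℕ} (α : ℝ)
    (K : Matrix (Fin (n + 1)) (Fin (n + 1)) ℝ)
    (hne : ∀ s : Finset (Fin n),
      perA α (K.submatrix (fun i : {i : Fin n // i ∈ s} => i.1.succ)
        (fun i : {i : Fin n // i ∈ s} => i.1.succ)) ≠ 0) :
    Rap α (fun u v => K u v) Fin.succ n 0 Finset.univ =
      perA α K / perA α (K.submatrix Fin.succ Fin.succ) := by
  have hPe : ∀ s : Finset (Fin n), PeF α (fun u v => K u v) Fin.succ s =
      perA α (K.submatrix (fun i : {i : Fin n // i ∈ s} => i.1.succ)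
        (fun i : {i : Fin n // i ∈ s} => i.1.succ)) := fun s => rfl
  have hPeU : PeF α (fun u v => K u v) Fin.succ (Finset.univ : Finset (Fin n)) =
      perA α (K.submatrix Fin.succ Fin.succ) := by
    rw [PeF_def, ← perA_reindex α (Equiv.subtypeUnivEquiv (fun i : Fin n => Finset.mem_univ i))
      (K.submatrix Fin.succ Fin.succ)]
    have hM : (Matrix.of fun a b : {i : Fin n // i ∈ (Finset.univ : Finset (Fin n))} =>
          (fun u v => K u v) (Fin.succ a.1) (Fin.succ b.1)) =
        (K.submatrix Fin.succ Fin.succ).submatrix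
          (Equiv.subtypeUnivEquiv (fun i : Fin n => Finset.mem_univ i))
          (Equiv.subtypeUnivEquiv (fun i : Fin n => Finset.mem_univ i)) := by
      ext a b
      rfl
    rw [hM]
  rcases n with _ | m
  · -- n = 0
    rw [Rap]
    have h1 : perA α (K.submatrix Fin.succ Fin.succ) = 1 := perA_isEmpty α _
    haveI : Subsingleton (Fin (0 + 1)) := Fin.subsingleton_one
    have h2 : perA α K = α * K 0 0 := perA_subsingleton α 0 K
    rw [h1, h2, div_one]
  · -- n = m + 1
    have hα : α ≠ 0 := by
      have h1 := hne {0}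
      haveI : Subsingleton {i : Fin (m+1) // i ∈ ({0} : Finset (Fin (m+1)))} :=
        ⟨fun a b => Subtype.ext (by
          rw [Finset.mem_singleton.mp a.2, Finset.mem_singleton.mp b.2])⟩
      rw [perA_subsingleton α ⟨0, Finset.mem_singleton_self 0⟩] at h1
      exact fun h0 => h1 (by rw [h0, zero_mul])
    have hne' : ∀ s : Finset (Fin (m+1)), PeF α (fun u v => K u v) Fin.succ s ≠ 0 :=
      fun s => by rw [hPe s]; exact hne s
    have hcard : (Finset.univ : Finset (Fin (m+1))).card = m + 1 := by simp
    have hR := (main_ind α (fun u v => K u v) Fin.succ hα hne' (m+1) Finset.univ hcard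
      (m+1) le_rfl).1 0
    rw [hR, hPeU]
    congr 1
    -- PBF univ 0 0 = perA α K
    rw [PBF_def, ← perA_reindex α ((Equiv.optionCongr
        (Equiv.subtypeUnivEquiv (fun i : Fin (m+1) => Finset.mem_univ i))).trans
        (finSuccEquiv (m+1)).symm) K]
    have hM : K.submatrix
        (((Equiv.optionCongr (Equiv.subtypeUnivEquiv (fun i : Fin (m+1) => Finset.mem_univ i))).trans
          (finSuccEquiv (m+1)).symm) : _ → _)
        (((Equiv.optionCongr (Equiv.subtypeUnivEquiv (fun i : Fin (m+1) => Finset.mem_univ i))).trans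
          (finSuccEquiv (m+1)).symm) : _ → _) =
        Matrix.of (fun a b : Option {i : Fin (m+1) // i ∈ (Finset.univ : Finset (Fin (m+1)))} =>
          K (a.elim 0 (fun i => i.1.succ)) (b.elim 0 (fun i => i.1.succ))) := by
      ext a b
      rcases a with _ | z <;> rcases b with _ | w <;>
        simp [Matrix.submatrix_apply, Equiv.optionCongr_apply, Option.map_none, Option.map_some,
          finSuccEquiv_symm_none, finSuccEquiv_symm_some, Equiv.subtypeUnivEquiv]
    rw [hM]
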